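/- arXiv:2508.00012 — 2 statements merged into one kernel-verified Lean document; each statement's English description precedes it below -/
import Mathlib

section
/- For $p \in (0,1)$, the number $r_{0,p} = (1 + 1/p + p) - (\sqrt{p} + 1/\sqrt{p})\sqrt{p + 1/p}$ is a root of the quadratic equation $p r^2 - 2(1+p+p^2) r + p = 0$, and moreover $r_{0,p} \in (0,p)$. -/
/-!
With `a = 1 + 1/p + p`, the square of `(√p + 1/√p) √(p + 1/p)` is
`(a + 1)(a - 1) = a² - 1`, so `r = a - √(a² - 1)` is the smaller root of `r² - 2ar + 1 = 0`;
multiplying by `p` and using `p a = 1 + p + p²` gives the quadratic. The smaller root is positive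
because `√(a² - 1) < a`, and it is below `p` because `(a - p)² < a² - 1` reduces to
`0 < (1 + p)²`.
-/

namespace Real

variable {a : ℝ}

lemma sub_sqrt_sq_sub_one_isRoot (ha : 1 ≤ a) :
    (a - √(a ^ 2 - 1)) ^ 2 - 2 * a * (a - √(a ^ 2 - 1)) + 1 = 0 := by
  linear_combination Real.sq_sqrt (show 0 ≤ a ^ 2 - 1 by nlinarith)

lemma sub_sqrt_sq_sub_one_pos (ha : 0 < a) : 0 < a - √(a ^ 2 - 1) :=
  sub_pos.2 ((Real.sqrt_lt' ha).2 (by linarith))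

lemma sub_sqrt_sq_sub_one_lt {b : ℝ} (hba : b ≤ a) (h : b ^ 2 + 1 < 2 * a * b) :
    a - √(a ^ 2 - 1) < b := by
  have : a - b < √(a ^ 2 - 1) := (Real.lt_sqrt (sub_nonneg.2 hba)).2 (by nlinarith)
  linarith

lemma sqrt_add_one_div_sqrt_mul_sqrt {p : ℝ} (hp : 0 < p) :
    (√p + 1 / √p) * √(p + 1 / p) = √((1 + 1 / p + p) ^ 2 - 1) := by
  have hsp : 0 < √p := Real.sqrt_pos.2 hp
  have hpp : √p ^ 2 = p := Real.sq_sqrt hp.le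
  rw [eq_comm, Real.sqrt_eq_iff_mul_self_eq (by nlinarith [one_div_pos.2 hp]) (by positivity),
    mul_mul_mul_comm, Real.mul_self_sqrt (by positivity)]
  field_simp
  rw [hpp]
  ring

end Real

theorem stmt1 (p : ℝ) (hp : p ∈ Set.Ioo (0:ℝ) 1)
    (r : ℝ)
    (hr : r = (1 + 1 / p + p) - (Real.sqrt p + 1 / Real.sqrt p) * Real.sqrt (p + 1 / p)) :
    p * r ^ 2 - 2 * (1 + p + p ^ 2) * r + p = 0 ∧ r ∈ Set.Ioo 0 p := by
  have hp0 : 0 < p := hp.1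
  rw [Real.sqrt_add_one_div_sqrt_mul_sqrt hp0] at hr
  set a := 1 + 1 / p + p
  have hpa : p * a = 1 + p + p ^ 2 := by simp only [a]; field_simp; ring
  have hinv : 0 < 1 / p := one_div_pos.2 hp0
  subst hr
  refine ⟨?_, Real.sub_sqrt_sq_sub_one_pos (by positivity), ?_⟩
  · rw [← hpa]
    linear_combination p * Real.sub_sqrt_sq_sub_one_isRoot (a := a) (by linarith)
  · exact Real.sub_sqrt_sq_sub_one_lt (by linarith) (by nlinarith)
end

section
/- Let $K \ge 1$, $k=(K-1)/(K+1)$, and $\alpha \in [0,1)$. Let $R^*_{k,\alpha} \in (0,1)$ be the unique root of $\frac{2K}{K+1}\cdot\frac{r}{(1-r)^{2(1-\alpha)}} = \frac{1}{2^{2(1-\alpha)}}$. Then $R^*_{k,\alpha} \le 1/3$ if and only if $\alpha \le \frac{1}{2}\log_3(3+3k)$. -/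
/-! For β = 2(1 - α) > 0 the left-hand side `r ↦ C r / (1 - r)^β` of the defining equation is
strictly increasing on `[0, 1)`, so its root satisfies `R ≤ 1/3` exactly when the left-hand side at
`r = 1/3` already reaches `2^(-β)`. Since `(1/3) / (2/3)^β = 3^(β-1) / 2^β` and `3^β = 9 / 3^(2α)`,
that comparison reads `3^(2α) ≤ 3C = 3 + 3k`, i.e. `α ≤ ½ log₃ (3 + 3k)`. -/

open Real

lemma strictMonoOn_div_one_sub_rpow {β : ℝ} (hβ : 0 ≤ β) :
    StrictMonoOn (fun r : ℝ => r / (1 - r) ^ β) (Set.Ico 0 1) := by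
  rintro a ⟨ha0, -⟩ b ⟨hb0, hb1⟩ hab
  exact div_lt_div₀ hab (rpow_le_rpow (by linarith) (by linarith) hβ) hb0
    (rpow_pos_of_pos (by linarith) β)

lemma one_div_two_rpow_le_mul_iff (C α : ℝ) :
    1 / (2 : ℝ) ^ (2 * (1 - α)) ≤ C * ((1 / 3) / (1 - 1 / 3) ^ (2 * (1 - α))) ↔
      (3 : ℝ) ^ (2 * α) ≤ 3 * C := by
  have h3 : (3 : ℝ) ^ (2 * (1 - α)) = 9 / 3 ^ (2 * α) := by
    rw [show 2 * (1 - α) = (2 : ℕ) - 2 * α by push_cast; ring, rpow_sub (by norm_num),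
      rpow_natCast]
    norm_num
  have h2pos : (0 : ℝ) < 2 ^ (2 * (1 - α)) := by positivity
  have h3pos : (0 : ℝ) < 3 ^ (2 * α) := by positivity
  rw [show (1 : ℝ) - 1 / 3 = 2 / 3 by norm_num, div_rpow (by norm_num) (by norm_num), h3,
    show C * (1 / 3 / (2 ^ (2 * (1 - α)) / (9 / 3 ^ (2 * α)))) =
      3 * C / 3 ^ (2 * α) * (1 / 2 ^ (2 * (1 - α))) by field_simp; ring,
    le_mul_iff_one_le_left (by positivity), one_le_div h3pos]

lemma le_half_mul_logb_iff {b x α : ℝ} (hb : 1 < b) (hx : 0 < x) :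
    α ≤ 1 / 2 * logb b x ↔ b ^ (2 * α) ≤ x := by
  rw [← le_logb_iff_rpow_le hb hx]
  constructor <;> intro h <;> linarith

theorem stmt13_general (K k α R : ℝ) (hK : 1 ≤ K) (hk : k = (K - 1) / (K + 1))
    (hα : α ∈ Set.Ico (0:ℝ) 1) (hR : R ∈ Set.Ioo (0:ℝ) 1)
    (heq : (2 * K / (K + 1)) * (R / (1 - R) ^ (2 * (1 - α))) = 1 / (2:ℝ) ^ (2 * (1 - α))) :
    R ≤ 1 / 3 ↔ α ≤ (1 / 2) * Real.logb 3 (3 + 3 * k) := by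
  have hC : 0 < 2 * K / (K + 1) := by apply div_pos <;> linarith
  have h3k : 3 + 3 * k = 3 * (2 * K / (K + 1)) := by
    rw [hk]; field_simp; ring
  have hmono := strictMonoOn_div_one_sub_rpow (β := 2 * (1 - α)) (by linarith [hα.2])
  rw [← hmono.le_iff_le ⟨hR.1.le, hR.2⟩ (by norm_num), ← mul_le_mul_iff_right₀ hC, heq,
    one_div_two_rpow_le_mul_iff, h3k, le_half_mul_logb_iff (by norm_num) (by positivity)]

theorem stmt13 (K k α R : ℝ) (hK : 1 ≤ K) (hk : k = (K - 1) / (K + 1))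
    (hα : α ∈ Set.Ico (0:ℝ) 1) (hR : R ∈ Set.Ioo (0:ℝ) 1)
    (heq : (2 * K / (K + 1)) * (R / (1 - R) ^ (2 * (1 - α))) = 1 / (2:ℝ) ^ (2 * (1 - α)))
    (huniq : ∀ r ∈ Set.Ioo (0:ℝ) 1,
      (2 * K / (K + 1)) * (r / (1 - r) ^ (2 * (1 - α))) = 1 / (2:ℝ) ^ (2 * (1 - α)) → r = R) :
    R ≤ 1 / 3 ↔ α ≤ (1 / 2) * Real.logb 3 (3 + 3 * k) :=
  stmt13_general K k α R hK hk hα hR heq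
end
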